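/- arXiv:1402.5848 — 9 statements merged into one kernel-verified Lean document; each statement's English description precedes it below -/
import Mathlib

section
/- Let I and J be nonempty open real intervals, let f, g : I → ℝ be smooth with f(u) > 0, f'(u)² + g'(u)² = 1 and g'(u) ≠ 0 for all u ∈ I, let κ : J → ℝ be a smooth function with κ(v) ≠ 0 for all v ∈ J, and set κ_m(u) = f'(u)g''(u) − g'(u)f''(u). Assume also κ_m(u) ≠ 0 for all u ∈ I. Then κ(v)² + g'(u)² − f(u)²·κ_m(u)² = 0 for all (u,v) ∈ I × J if and only if there exists a constant b > 0 such that κ(v)² = b² for all v ∈ J and f(u)²·f''(u)² = b²·(1 − f'(u)²) + (1 − f'(u)²)² for all u ∈ I. (This is the reduction of the classification of Chen meridian surfaces: the Chen condition λ = 0, whose numerator is κ² + g'² − f²κ_m², holds identically if and only if the curve on the sphere is a circle of constant spherical curvature b and the meridian satisfies the stated ODE.) -/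
/-- Reduction of the classification of Chen meridian surfaces: the Chen condition
`λ = 0`, whose numerator is `κ² + g'² − f²κ_m²`, holds identically if and only if
the spherical curve is a circle of constant spherical curvature `b > 0` and the
meridian satisfies `f²f''² = b²(1 − f'²) + (1 − f'²)²`. -/
theorem chen_meridian_reduction
    (I J : Set ℝ) (hI : IsOpen I) (hIc : I.OrdConnected) (hIne : I.Nonempty)
    (hJ : IsOpen J) (hJc : J.OrdConnected) (hJne : J.Nonempty)
    (f g κ : ℝ → ℝ)
    (hf : ContDiffOn ℝ (⊤ : ℕ∞) f I) (hg : ContDiffOn ℝ (⊤ : ℕ∞) g I)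
    (hκ : ContDiffOn ℝ (⊤ : ℕ∞) κ J)
    (hfpos : ∀ u ∈ I, 0 < f u)
    (hunit : ∀ u ∈ I, (deriv f u) ^ 2 + (deriv g u) ^ 2 = 1)
    (hg' : ∀ u ∈ I, deriv g u ≠ 0)
    (κm : ℝ → ℝ)
    (hκm : ∀ u ∈ I, κm u =
      deriv f u * deriv (deriv g) u - deriv g u * deriv (deriv f) u)
    (hκm0 : ∀ u ∈ I, κm u ≠ 0)
    (hκ0 : ∀ v ∈ J, κ v ≠ 0) :
    (∀ u ∈ I, ∀ v ∈ J, (κ v) ^ 2 + (deriv g u) ^ 2 - (f u) ^ 2 * (κm u) ^ 2 = 0) ↔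
      (∃ b : ℝ, 0 < b ∧ (∀ v ∈ J, (κ v) ^ 2 = b ^ 2) ∧
        ∀ u ∈ I, (f u) ^ 2 * (deriv (deriv f) u) ^ 2 =
          b ^ 2 * (1 - (deriv f u) ^ 2) + (1 - (deriv f u) ^ 2) ^ 2) := by
  -- differentiability of first derivatives
  have hf1 : ContDiffOn ℝ (⊤ : ℕ∞) (deriv f) I := hf.deriv_of_isOpen hI (by simp)
  have hg1 : ContDiffOn ℝ (⊤ : ℕ∞) (deriv g) I := hg.deriv_of_isOpen hI (by simp)
  have hfd : ∀ u ∈ I, DifferentiableAt ℝ (deriv f) u := fun u hu =>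
    (hf1.differentiableOn (by simp)).differentiableAt (hI.mem_nhds hu)
  have hgd : ∀ u ∈ I, DifferentiableAt ℝ (deriv g) u := fun u hu =>
    (hg1.differentiableOn (by simp)).differentiableAt (hI.mem_nhds hu)
  -- differentiate the unit-speed relation
  have key : ∀ u ∈ I, deriv f u * deriv (deriv f) u
      + deriv g u * deriv (deriv g) u = 0 := by
    intro u hu
    have hF : HasDerivAt (fun x => (deriv f x) ^ 2 + (deriv g x) ^ 2)
        (2 * deriv f u * deriv (deriv f) u + 2 * deriv g u * deriv (deriv g) u) u := by
      have h1 := ((hfd u hu).hasDerivAt).pow 2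
      have h2 := ((hgd u hu).hasDerivAt).pow 2
      have := (h1.add h2 : HasDerivAt (fun x => (deriv f x) ^ 2 + (deriv g x) ^ 2) _ u)
      exact this.congr_deriv (by norm_num [pow_one])
    have heq : (fun x => (deriv f x) ^ 2 + (deriv g x) ^ 2) =ᶠ[nhds u]
        (fun _ => (1 : ℝ)) := by
      filter_upwards [hI.mem_nhds hu] with x hx using hunit x hx
    have h0 : deriv (fun x => (deriv f x) ^ 2 + (deriv g x) ^ 2) u
        = deriv (fun _ => (1 : ℝ)) u := heq.deriv_eq
    rw [hF.deriv, deriv_const] at h0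
    linarith
  -- g' * κm = - f''
  have hB : ∀ u ∈ I, deriv g u * κm u = - deriv (deriv f) u := by
    intro u hu
    have h1 := hunit u hu
    have h2 := key u hu
    have h3 := hκm u hu
    linear_combination (deriv g u) * h3 + (deriv f u) * h2
      - (deriv (deriv f) u) * h1
  constructor
  · intro h
    obtain ⟨u₀, hu₀⟩ := hIne
    obtain ⟨v₀, hv₀⟩ := hJne
    refine ⟨|κ v₀|, abs_pos.mpr (hκ0 v₀ hv₀), ?_, ?_⟩
    · intro v hv
      have h1 := h u₀ hu₀ v hv
      have h2 := h u₀ hu₀ v₀ hv₀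
      rw [sq_abs]
      linarith
    · intro u hu
      have h1 := h u hu v₀ hv₀
      have h2 := hB u hu
      have h3 := hunit u hu
      have e1 : deriv (deriv f) u ^ 2 = (deriv g u) ^ 2 * (κm u) ^ 2 := by
        linear_combination (deriv (deriv f) u - deriv g u * κm u) * h2
      rw [sq_abs]
      linear_combination (f u) ^ 2 * e1 - (deriv g u) ^ 2 * h1
        + ((κ v₀) ^ 2 + (deriv g u) ^ 2 + 1 - (deriv f u) ^ 2) * h3
  · rintro ⟨b, hb, hbκ, hode⟩
    intro u hu v hv
    have h1 := hbκ v hv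
    have h2 := hB u hu
    have h3 := hunit u hu
    have h4 := hode u hu
    have hg'u := hg' u hu
    have hg2 : (deriv g u) ^ 2 ≠ 0 := pow_ne_zero 2 hg'u
    -- f² κm² g'² = f² f''² = b² g'² + g'⁴ = g'²(b² + g'²)
    have e1 : deriv (deriv f) u ^ 2 = (deriv g u) ^ 2 * (κm u) ^ 2 := by
      linear_combination (deriv (deriv f) u - deriv g u * κm u) * h2
    have h5 : (f u) ^ 2 * (κm u) ^ 2 * (deriv g u) ^ 2
        = (b ^ 2 + (deriv g u) ^ 2) * (deriv g u) ^ 2 := by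
      linear_combination -(f u) ^ 2 * e1 + h4
        - (b ^ 2 + 1 - (deriv f u) ^ 2 + (deriv g u) ^ 2) * h3
    have h6 : (f u) ^ 2 * (κm u) ^ 2 = b ^ 2 + (deriv g u) ^ 2 :=
      mul_right_cancel₀ hg2 h5
    linarith
end

section
/- Let a ≠ 0 and b be real constants and let ε ∈ {1, −1}. Let T ⊂ (0, ∞) be an open interval on which a·t^{2ε} ≠ 0, and define z : T → ℝ by z(t) = (a·t^{2ε} − b²)²/(4a·t^{2ε}). Then z is differentiable and satisfies ((t/2)·z'(t))² = b²·z(t) + z(t)² for all t ∈ T. Consequently, any function y with y(t)² = 1 − z(t) satisfies (t²/4)·((y²)'(t))² = b²·(1 − y(t)²) + (1 − y(t)²)², i.e. y(t) = ±(1/(2t^{±1}))·√(4t^{±2} − a(t^{±2} − b²/a)²) solves the Chen-meridian ODE obtained from f²f''² = b²(1 − f'²) + (1 − f'²)² by the substitution f' = y(f). -/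
/-! With `u = a t^{2ε}` one has `z = (u - b²)² / (4u)` and `(t/2) d/dt = ε u d/du`, so,
as `ε² = 1`, the equation `((t/2) z')² = b² z + z²` becomes `(u z_u)² = b² z + z²`. In the
variable `u` this is an identity of rational functions: `u z_u = (u² - b⁴) / (4u)` and
`z (b² + z) = ((u² - b⁴) / (4u))²`. The equation for `y` follows because `(y²)' = -z'`
wherever `y² = 1 - z`. -/

open Filter Topology

noncomputable def meridianZ (b u : ℝ) : ℝ := (u - b ^ 2) ^ 2 / (4 * u)

lemma hasDerivAt_meridianZ (b : ℝ) {u : ℝ} (hu : u ≠ 0) :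
    HasDerivAt (meridianZ b) ((u ^ 2 - b ^ 4) / (4 * u ^ 2)) u := by
  refine ((((hasDerivAt_id' u).sub_const (b ^ 2)).fun_pow 2).fun_div
    ((hasDerivAt_id' u).const_mul 4) (mul_ne_zero four_ne_zero hu)).congr_deriv ?_
  field_simp
  ring

lemma meridianZ_euler_ode (b : ℝ) {u : ℝ} (hu : u ≠ 0) :
    (u * ((u ^ 2 - b ^ 4) / (4 * u ^ 2))) ^ 2 = b ^ 2 * meridianZ b u + meridianZ b u ^ 2 := by
  unfold meridianZ
  field_simp
  ring

lemma hasDerivAt_const_mul_zpow (a : ℝ) (n : ℤ) {t : ℝ} (ht : t ≠ 0) :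
    HasDerivAt (fun s => a * s ^ n) (n * (a * t ^ n) / t) t := by
  refine ((hasDerivAt_zpow n t (Or.inl ht)).const_mul a).congr_deriv ?_
  rw [zpow_sub_one₀ ht]
  field_simp

lemma sq_half_mul_deriv_comp_const_mul_zpow {F : ℝ → ℝ} {F' a t : ℝ} {ε : ℤ}
    (hε : (ε : ℝ) ^ 2 = 1) (ht : t ≠ 0) (hF : HasDerivAt F F' (a * t ^ (2 * ε))) :
    ((t / 2) * deriv (fun s => F (a * s ^ (2 * ε))) t) ^ 2 = (a * t ^ (2 * ε) * F') ^ 2 := by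
  have hcomp : HasDerivAt (fun s => F (a * s ^ (2 * ε)))
      (F' * ((2 * ε : ℤ) * (a * t ^ (2 * ε)) / t)) t :=
    hF.comp t (hasDerivAt_const_mul_zpow a (2 * ε) ht)
  rw [hcomp.deriv]
  field_simp
  push_cast
  linear_combination 4 * (a * F') ^ 2 * hε

lemma chen_ode_of_sq_eventuallyEq_one_sub {y z : ℝ → ℝ} {b t : ℝ}
    (hy : (fun s => y s ^ 2) =ᶠ[𝓝 t] fun s => 1 - z s)
    (hz : ((t / 2) * deriv z t) ^ 2 = b ^ 2 * z t + z t ^ 2) :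
    (t ^ 2 / 4) * (deriv (fun s => y s ^ 2) t) ^ 2 =
      b ^ 2 * (1 - y t ^ 2) + (1 - y t ^ 2) ^ 2 := by
  rw [hy.deriv_eq, deriv_const_sub, hy.eq_of_nhds, sub_sub_cancel, ← hz]
  ring

theorem chen_meridian_ode_solution_general
    (a b : ℝ) (ε : ℤ) (hε : ε = 1 ∨ ε = -1)
    (T : Set ℝ) (hT : IsOpen T) (hTsub : T ⊆ Set.Ioi 0)
    (hne : ∀ t ∈ T, a * t ^ (2 * ε) ≠ 0)
    (z : ℝ → ℝ)
    (hz : ∀ t ∈ T, z t = (a * t ^ (2 * ε) - b ^ 2) ^ 2 / (4 * a * t ^ (2 * ε))) :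
    (∀ t ∈ T, DifferentiableAt ℝ z t ∧
      ((t / 2) * deriv z t) ^ 2 = b ^ 2 * z t + (z t) ^ 2) ∧
    (∀ y : ℝ → ℝ, (∀ t ∈ T, (y t) ^ 2 = 1 - z t) →
      ∀ t ∈ T, (t ^ 2 / 4) * (deriv (fun s => (y s) ^ 2) t) ^ 2 =
        b ^ 2 * (1 - (y t) ^ 2) + (1 - (y t) ^ 2) ^ 2) := by
  have hε2 : (ε : ℝ) ^ 2 = 1 := by rcases hε with rfl | rfl <;> norm_num
  have hz_nhds : ∀ t ∈ T, z =ᶠ[𝓝 t] fun s => meridianZ b (a * s ^ (2 * ε)) := fun t ht =>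
    eventuallyEq_of_mem (hT.mem_nhds ht) fun s hs => by rw [hz s hs, meridianZ, mul_assoc]
  have hode : ∀ t ∈ T, DifferentiableAt ℝ z t ∧
      ((t / 2) * deriv z t) ^ 2 = b ^ 2 * z t + (z t) ^ 2 := by
    intro t ht
    have ht0 : t ≠ 0 := (hTsub ht).ne'
    have hF := hasDerivAt_meridianZ b (hne t ht)
    refine ⟨((hF.comp t (hasDerivAt_const_mul_zpow a (2 * ε) ht0)).congr_of_eventuallyEq
      (hz_nhds t ht)).differentiableAt, ?_⟩
    rw [(hz_nhds t ht).deriv_eq, (hz_nhds t ht).eq_of_nhds,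
      sq_half_mul_deriv_comp_const_mul_zpow hε2 ht0 hF, meridianZ_euler_ode b (hne t ht)]
  exact ⟨hode, fun y hy t ht => chen_ode_of_sq_eventuallyEq_one_sub
    (eventuallyEq_of_mem (hT.mem_nhds ht) hy) (hode t ht).2⟩

/-- The function `z(t) = (a t^{2ε} − b²)² / (4 a t^{2ε})` (with `ε = ±1`) is
differentiable and solves `((t/2) z')² = b² z + z²`; consequently any `y` with
`y² = 1 − z` solves the Chen-meridian ODE `(t²/4)((y²)')² = b²(1 − y²) + (1 − y²)²`. -/
theorem chen_meridian_ode_solution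
    (a b : ℝ) (ha : a ≠ 0) (ε : ℤ) (hε : ε = 1 ∨ ε = -1)
    (T : Set ℝ) (hT : IsOpen T) (hTc : T.OrdConnected) (hTsub : T ⊆ Set.Ioi 0)
    (hne : ∀ t ∈ T, a * t ^ (2 * ε) ≠ 0)
    (z : ℝ → ℝ)
    (hz : ∀ t ∈ T, z t = (a * t ^ (2 * ε) - b ^ 2) ^ 2 / (4 * a * t ^ (2 * ε))) :
    (∀ t ∈ T, DifferentiableAt ℝ z t ∧
      ((t / 2) * deriv z t) ^ 2 = b ^ 2 * z t + (z t) ^ 2) ∧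
    (∀ y : ℝ → ℝ, (∀ t ∈ T, (y t) ^ 2 = 1 - z t) →
      ∀ t ∈ T, (t ^ 2 / 4) * (deriv (fun s => (y s) ^ 2) t) ^ 2 =
        b ^ 2 * (1 - (y t) ^ 2) + (1 - (y t) ^ 2) ^ 2) :=
  chen_meridian_ode_solution_general a b ε hε T hT hTsub hne z hz
end

section
/- Let I and J be nonempty open real intervals with I connected, let f : I → ℝ be smooth with f(u) > 0, let φ : I → ℝ be smooth, and let κ : J → ℝ be smooth with κ(v) ≠ 0 for all v ∈ J. Define D(u,v) = κ(v)² + φ(u)² and β₁(u,v) = (1/(√2·D(u,v)))·(κ(v)·φ'(u) − κ'(v)·φ(u)/f(u)), β₂(u,v) = −(1/(√2·D(u,v)))·(κ(v)·φ'(u) + κ'(v)·φ(u)/f(u)). Then β₁ ≡ 0 and β₂ ≡ 0 on I × J if and only if either φ ≡ 0 on I, or there exists a constant a ≠ 0 with φ(u) = a for all u ∈ I and κ is constant on J. (This is the reduction of the classification of meridian surfaces with parallel normal bundle, where φ = g' + f·κ_m.) -/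
/-- A function with zero derivative on an open convex set is constant there. -/
lemma const_of_deriv_zero_on {s : Set ℝ} (hs : IsOpen s) (hc : Convex ℝ s)
    {f : ℝ → ℝ} (hf : ContDiffOn ℝ (⊤ : ℕ∞) f s) (h : ∀ x ∈ s, deriv f x = 0)
    {x y : ℝ} (hx : x ∈ s) (hy : y ∈ s) : f x = f y := by
  apply hc.is_const_of_fderivWithin_eq_zero
    (hf.differentiableOn (by simp)) _ hx hy
  intro z hz
  rw [fderivWithin_of_isOpen hs hz]
  ext t
  simp [← toSpanSingleton_deriv, h z hz]

/-- Eventually-constant functions have zero derivative. -/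
lemma deriv_eq_zero_of_eqOn_const {s : Set ℝ} (hs : IsOpen s) {f : ℝ → ℝ} {c : ℝ}
    (h : ∀ x ∈ s, f x = c) {x : ℝ} (hx : x ∈ s) : deriv f x = 0 := by
  have : f =ᶠ[nhds x] fun _ => c :=
    Filter.eventuallyEq_of_mem (hs.mem_nhds hx) h
  rw [this.deriv_eq, deriv_const]

/-- Reduction of the classification of meridian surfaces with parallel normal bundle:
`β₁ ≡ 0` and `β₂ ≡ 0` if and only if either `φ ≡ 0`, or `φ` is a nonzero constant
and `κ` is constant (here `φ = g' + f·κ_m`). -/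
theorem parallel_normal_bundle_reduction
    (I J : Set ℝ) (hI : IsOpen I) (hIc : I.OrdConnected) (hIne : I.Nonempty)
    (hJ : IsOpen J) (hJc : J.OrdConnected) (hJne : J.Nonempty)
    (f φ κ : ℝ → ℝ)
    (hf : ContDiffOn ℝ (⊤ : ℕ∞) f I) (hφ : ContDiffOn ℝ (⊤ : ℕ∞) φ I) (hκ : ContDiffOn ℝ (⊤ : ℕ∞) κ J)
    (hfpos : ∀ u ∈ I, 0 < f u)
    (hκ0 : ∀ v ∈ J, κ v ≠ 0)
    (D β₁ β₂ : ℝ → ℝ → ℝ)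
    (hD : ∀ u v, D u v = (κ v) ^ 2 + (φ u) ^ 2)
    (hβ₁ : ∀ u v, β₁ u v =
      (1 / (Real.sqrt 2 * D u v)) * (κ v * deriv φ u - deriv κ v * φ u / f u))
    (hβ₂ : ∀ u v, β₂ u v =
      -(1 / (Real.sqrt 2 * D u v)) * (κ v * deriv φ u + deriv κ v * φ u / f u)) :
    (∀ u ∈ I, ∀ v ∈ J, β₁ u v = 0 ∧ β₂ u v = 0) ↔
      ((∀ u ∈ I, φ u = 0) ∨
        (∃ a : ℝ, a ≠ 0 ∧ (∀ u ∈ I, φ u = a) ∧ ∃ k₀ : ℝ, ∀ v ∈ J, κ v = k₀)) := by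
  have hIconv : Convex ℝ I := hIc.convex
  have hJconv : Convex ℝ J := hJc.convex
  have hD0 : ∀ u, ∀ v ∈ J, D u v ≠ 0 := by
    intro u v hv
    rw [hD]
    have := hκ0 v hv
    positivity
  constructor
  · intro hzero
    -- extract the two key equations
    have hkey : ∀ u ∈ I, ∀ v ∈ J, κ v * deriv φ u = 0 ∧ deriv κ v * φ u = 0 := by
      intro u hu v hv
      obtain ⟨h1, h2⟩ := hzero u hu v hv
      rw [hβ₁] at h1
      rw [hβ₂] at h2
      have hc : (1 / (Real.sqrt 2 * D u v)) ≠ 0 := by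
        have h2pos : Real.sqrt 2 ≠ 0 := by positivity
        simp [h2pos, hD0 u v hv]
      have hA : κ v * deriv φ u - deriv κ v * φ u / f u = 0 :=
        (mul_eq_zero.mp h1).resolve_left hc
      have hB : κ v * deriv φ u + deriv κ v * φ u / f u = 0 := by
        have : (1 / (Real.sqrt 2 * D u v)) * (κ v * deriv φ u + deriv κ v * φ u / f u) = 0 := by
          linarith [h2]
        rcases mul_eq_zero.mp this with h | h
        · exact absurd h hc
        · exact h
      have hφ' : κ v * deriv φ u = 0 := by linarith
      refine ⟨hφ', ?_⟩
      have : deriv κ v * φ u / f u = 0 := by linarith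
      have hfne : f u ≠ 0 := (hfpos u hu).ne'
      field_simp at this
      exact this.trans (mul_zero _)
    -- deriv φ = 0 on I
    have hφ' : ∀ u ∈ I, deriv φ u = 0 := by
      intro u hu
      obtain ⟨v, hv⟩ := hJne
      have := (hkey u hu v hv).1
      exact (mul_eq_zero.mp this).resolve_left (hκ0 v hv)
    obtain ⟨u₀, hu₀⟩ := hIne
    have hφconst : ∀ u ∈ I, φ u = φ u₀ := fun u hu =>
      const_of_deriv_zero_on hI hIconv hφ hφ' hu hu₀
    by_cases ha : φ u₀ = 0
    · left; intro u hu; rw [hφconst u hu, ha]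
    · right
      refine ⟨φ u₀, ha, hφconst, ?_⟩
      -- deriv κ = 0 on J
      have hκ' : ∀ v ∈ J, deriv κ v = 0 := by
        intro v hv
        have := (hkey u₀ hu₀ v hv).2
        exact (mul_eq_zero.mp this).resolve_right ha
      obtain ⟨v₀, hv₀⟩ := hJne
      exact ⟨κ v₀, fun v hv => const_of_deriv_zero_on hJ hJconv hκ hκ' hv hv₀⟩
  · rintro (h0 | ⟨a, ha, hφa, k₀, hκk⟩) <;> intro u hu v hv
    · have hdφ : deriv φ u = 0 := deriv_eq_zero_of_eqOn_const hI h0 hu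
      constructor
      · rw [hβ₁, hdφ, h0 u hu]; ring
      · rw [hβ₂, hdφ, h0 u hu]; ring
    · have hdφ : deriv φ u = 0 := deriv_eq_zero_of_eqOn_const hI hφa hu
      have hdκ : deriv κ v = 0 := deriv_eq_zero_of_eqOn_const hJ hκk hv
      constructor
      · rw [hβ₁, hdφ, hdκ]; ring
      · rw [hβ₂, hdφ, hdκ]; ring
end

section
/- Let I be an open real interval and f : I → ℝ a twice differentiable function with f(u) > 0 for all u ∈ I. Then f satisfies the differential equation f(u)·f''(u) = 1 − f'(u)² for all u ∈ I if and only if there exist real constants c and d such that f(u)² = u² + 2cu + d for all u ∈ I, i.e. f(u) = √(u² + 2cu + d). (This is case (i) of the classification of meridian surfaces with parallel normal bundle, where the condition g' + f·κ_m = 0 is equivalent to 1 − f'² − f·f'' = 0.) -/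
/-!
Since `(f f')' = f'² + f f''`, the equation `f f'' = 1 − f'²` says `(f f')' = 1`, i.e.
`f f' = u + c` on the interval; as `(f²)' = 2 f f'`, this in turn says `f² = u² + 2cu + d`.
Both integration steps are reversible because `I` is open and connected, and `f > 0` turns
`f² = q` into `f = √q`.
-/

open Filter Topology

theorem IsOpen.hasDerivAt_eq_iff_exists_eq_add {𝕜 E : Type*} [RCLike 𝕜] [NormedAddCommGroup E]
    [NormedSpace 𝕜 E] {s : Set 𝕜} (hs : IsOpen s) (hs' : IsPreconnected s)
    {F G F' G' : 𝕜 → E} (hF : ∀ x ∈ s, HasDerivAt F (F' x) x)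
    (hG : ∀ x ∈ s, HasDerivAt G (G' x) x) :
    (∀ x ∈ s, F' x = G' x) ↔ ∃ a, ∀ x ∈ s, F x = G x + a := by
  constructor
  · intro h
    exact hs.exists_eq_add_of_deriv_eq hs'
      (fun x hx => (hF x hx).differentiableAt.differentiableWithinAt)
      (fun x hx => (hG x hx).differentiableAt.differentiableWithinAt)
      (fun x hx => by rw [(hF x hx).deriv, (hG x hx).deriv, h x hx])
  · rintro ⟨a, ha⟩ x hx
    have hFG : F =ᶠ[𝓝 x] fun y => G y + a := eventuallyEq_of_mem (hs.mem_nhds hx) ha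
    exact (hF x hx).unique (((hG x hx).add_const a).congr_of_eventuallyEq hFG)

theorem hasDerivAt_mul_deriv_self {𝕜 : Type*} [NontriviallyNormedField 𝕜] {f : 𝕜 → 𝕜} {x : 𝕜}
    (hf : DifferentiableAt 𝕜 f x) (hf' : DifferentiableAt 𝕜 (deriv f) x) :
    HasDerivAt (fun y => f y * deriv f y) (deriv f x ^ 2 + f x * deriv (deriv f) x) x := by
  simpa only [sq] using hf.hasDerivAt.fun_mul hf'.hasDerivAt

/-- Case (i) of the classification of meridian surfaces with parallel normal bundle:
a positive twice differentiable function `f` on an open interval satisfies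
`f·f'' = 1 − f'²` if and only if `f(u)² = u² + 2cu + d`, i.e. `f(u) = √(u² + 2cu + d)`,
for some constants `c`, `d`. -/
theorem parallel_case_i_ode
    (I : Set ℝ) (hI : IsOpen I) (hIc : I.OrdConnected)
    (f : ℝ → ℝ)
    (hf1 : ∀ u ∈ I, DifferentiableAt ℝ f u)
    (hf2 : ∀ u ∈ I, DifferentiableAt ℝ (deriv f) u)
    (hfpos : ∀ u ∈ I, 0 < f u) :
    (∀ u ∈ I, f u * deriv (deriv f) u = 1 - (deriv f u) ^ 2) ↔
      (∃ c d : ℝ, ∀ u ∈ I,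
        (f u) ^ 2 = u ^ 2 + 2 * c * u + d ∧
        f u = Real.sqrt (u ^ 2 + 2 * c * u + d)) := by
  have hIp := hIc.isPreconnected
  have hsq (u) (hu : u ∈ I) : HasDerivAt (fun y => f y ^ 2) (2 * f u * deriv f u) u := by
    simpa using (hf1 u hu).hasDerivAt.fun_pow 2
  have hquad (c u : ℝ) : HasDerivAt (fun y => y ^ 2 + 2 * c * y) (2 * u + 2 * c) u := by
    simpa using (hasDerivAt_pow 2 u).fun_add ((hasDerivAt_id u).const_mul (2 * c))
  calc (∀ u ∈ I, f u * deriv (deriv f) u = 1 - deriv f u ^ 2)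
      ↔ ∀ u ∈ I, deriv f u ^ 2 + f u * deriv (deriv f) u = 1 :=
        forall₂_congr fun _ _ => by constructor <;> intro h <;> linarith
    _ ↔ ∃ c, ∀ u ∈ I, f u * deriv f u = u + c :=
        hI.hasDerivAt_eq_iff_exists_eq_add hIp
          (fun u hu => hasDerivAt_mul_deriv_self (hf1 u hu) (hf2 u hu))
          (fun u _ => hasDerivAt_id u)
    _ ↔ ∃ c d, ∀ u ∈ I, f u ^ 2 = u ^ 2 + 2 * c * u + d := exists_congr fun c => by
        rw [← hI.hasDerivAt_eq_iff_exists_eq_add hIp hsq fun u _ => hquad c u]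
        exact forall₂_congr fun _ _ => by constructor <;> intro h <;> linarith
    _ ↔ _ := exists₂_congr fun c d => forall₂_congr fun u hu =>
        ⟨fun h => ⟨h, by rw [← h, Real.sqrt_sq (hfpos u hu).le]⟩, And.left⟩
end

section
/- Let I be an open real interval, a a real constant, and f, g : I → ℝ twice differentiable with f(u) > 0, f'(u)² + g'(u)² = 1 and g'(u) > 0 for all u ∈ I. If 1 − f'(u)² − f(u)·f''(u) = a·g'(u) for all u ∈ I, then the function u ↦ f(u)·g'(u) has derivative a·f'(u); consequently there is a constant c with f(u)·g'(u) = a·f(u) + c for all u ∈ I, and hence f'(u)² = ((1 − a²)·f(u)² − 2ac·f(u) − c²)/f(u)² for all u ∈ I. (This is case (ii) of the classification of meridian surfaces with parallel normal bundle: the condition g' + f·κ_m = a gives the first integral f·g' = a·f + c.) -/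
open Filter Topology

lemma HasDerivAt.mul_add_mul_eq_zero_of_sq_add_sq_eq_one {p q : ℝ → ℝ} {p' q' u : ℝ}
    (hp : HasDerivAt p p' u) (hq : HasDerivAt q q' u)
    (h : ∀ᶠ x in 𝓝 u, p x ^ 2 + q x ^ 2 = 1) : p u * p' + q u * q' = 0 := by
  have hsum : HasDerivAt (fun x => p x ^ 2 + q x ^ 2) (2 * (p u * p' + q u * q')) u :=
    ((hp.fun_pow 2).fun_add (hq.fun_pow 2)).congr_deriv (by norm_num; ring)
  have hconst : HasDerivAt (fun x => p x ^ 2 + q x ^ 2) 0 u :=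
    (hasDerivAt_const u (1 : ℝ)).congr_of_eventuallyEq h
  simpa using hsum.unique hconst

/-- Differentiating `f'² + g'² = 1` gives `f' f'' = -g' g''`, which turns the equation
`1 - f'² - f f'' = a g'` into `g' (f g')' = g' · a f'`. -/
lemma hasDerivAt_mul_deriv_of_sq_add_sq_eq_one {f g : ℝ → ℝ} {a u : ℝ}
    (hf : DifferentiableAt ℝ f u) (hf' : DifferentiableAt ℝ (deriv f) u)
    (hg' : DifferentiableAt ℝ (deriv g) u)
    (hunit : ∀ᶠ x in 𝓝 u, deriv f x ^ 2 + deriv g x ^ 2 = 1) (hg'u : deriv g u ≠ 0)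
    (hode : 1 - deriv f u ^ 2 - f u * deriv (deriv f) u = a * deriv g u) :
    HasDerivAt (fun x => f x * deriv g x) (a * deriv f u) u := by
  have hdiff := hf'.hasDerivAt.mul_add_mul_eq_zero_of_sq_add_sq_eq_one hg'.hasDerivAt hunit
  refine (hf.hasDerivAt.mul hg'.hasDerivAt).congr_deriv (mul_left_cancel₀ hg'u ?_)
  linear_combination f u * hdiff + deriv f u * hode + deriv f u * hunit.self_of_nhds

lemma sq_eq_div_of_sq_add_sq_eq_one_of_mul_eq {p q r a c : ℝ} (hr : r ≠ 0)
    (hunit : p ^ 2 + q ^ 2 = 1) (hrq : r * q = a * r + c) :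
    p ^ 2 = ((1 - a ^ 2) * r ^ 2 - 2 * a * c * r - c ^ 2) / r ^ 2 := by
  field_simp
  linear_combination r ^ 2 * hunit - (r * q + a * r + c) * hrq

theorem parallel_case_ii_first_integral_general
    (I : Set ℝ) (hI : IsOpen I) (hIc : I.OrdConnected)
    (a : ℝ) (f g : ℝ → ℝ)
    (hf1 : ∀ u ∈ I, DifferentiableAt ℝ f u)
    (hf2 : ∀ u ∈ I, DifferentiableAt ℝ (deriv f) u)
    (hg2 : ∀ u ∈ I, DifferentiableAt ℝ (deriv g) u)
    (hfpos : ∀ u ∈ I, 0 < f u)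
    (hunit : ∀ u ∈ I, (deriv f u) ^ 2 + (deriv g u) ^ 2 = 1)
    (hg' : ∀ u ∈ I, 0 < deriv g u)
    (hode : ∀ u ∈ I, 1 - (deriv f u) ^ 2 - f u * deriv (deriv f) u = a * deriv g u) :
    (∀ u ∈ I, HasDerivAt (fun x => f x * deriv g x) (a * deriv f u) u) ∧
    ∃ c : ℝ, (∀ u ∈ I, f u * deriv g u = a * f u + c) ∧
      ∀ u ∈ I, (deriv f u) ^ 2 =
        ((1 - a ^ 2) * (f u) ^ 2 - 2 * a * c * f u - c ^ 2) / (f u) ^ 2 := by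
  have hfg : ∀ u ∈ I, HasDerivAt (fun x => f x * deriv g x) (a * deriv f u) u := fun u hu =>
    hasDerivAt_mul_deriv_of_sq_add_sq_eq_one (hf1 u hu) (hf2 u hu) (hg2 u hu)
      (eventually_of_mem (hI.mem_nhds hu) hunit) (hg' u hu).ne' (hode u hu)
  obtain ⟨c, hc⟩ := hI.exists_eq_add_of_deriv_eq hIc.isPreconnected
    (fun u hu => (hfg u hu).differentiableAt.differentiableWithinAt)
    (fun u hu => ((hf1 u hu).const_mul a).differentiableWithinAt)
    (fun u hu => by rw [(hfg u hu).deriv, deriv_const_mul _ (hf1 u hu)])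
  exact ⟨hfg, c, hc, fun u hu =>
    sq_eq_div_of_sq_add_sq_eq_one_of_mul_eq (hfpos u hu).ne' (hunit u hu) (hc hu)⟩

/-- Case (ii) of the classification of meridian surfaces with parallel normal bundle:
if `1 − f'² − f·f'' = a·g'` on `I`, then `(f·g')' = a·f'`, so `f·g' = a·f + c` for
some constant `c`, whence `f'² = ((1 − a²)f² − 2acf − c²)/f²`. -/
theorem parallel_case_ii_first_integral
    (I : Set ℝ) (hI : IsOpen I) (hIc : I.OrdConnected)
    (a : ℝ) (f g : ℝ → ℝ)
    (hf1 : ∀ u ∈ I, DifferentiableAt ℝ f u)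
    (hf2 : ∀ u ∈ I, DifferentiableAt ℝ (deriv f) u)
    (hg1 : ∀ u ∈ I, DifferentiableAt ℝ g u)
    (hg2 : ∀ u ∈ I, DifferentiableAt ℝ (deriv g) u)
    (hfpos : ∀ u ∈ I, 0 < f u)
    (hunit : ∀ u ∈ I, (deriv f u) ^ 2 + (deriv g u) ^ 2 = 1)
    (hg' : ∀ u ∈ I, 0 < deriv g u)
    (hode : ∀ u ∈ I, 1 - (deriv f u) ^ 2 - f u * deriv (deriv f) u = a * deriv g u) :
    (∀ u ∈ I, HasDerivAt (fun x => f x * deriv g x) (a * deriv f u) u) ∧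
    ∃ c : ℝ, (∀ u ∈ I, f u * deriv g u = a * f u + c) ∧
      ∀ u ∈ I, (deriv f u) ^ 2 =
        ((1 - a ^ 2) * (f u) ^ 2 - 2 * a * c * f u - c ^ 2) / (f u) ^ 2 :=
  parallel_case_ii_first_integral_general I hI hIc a f g hf1 hf2 hg2 hfpos hunit hg' hode
end

section
/- Let a ≠ 0 and c be real constants and let T ⊂ (0, ∞) be an open interval on which (1 − a²)t² − 2ac·t − c² > 0 and a·t + c > 0. Define y : T → ℝ by y(t) = √((1 − a²)t² − 2ac·t − c²)/t. Then 1 − y(t)² = ((a·t + c)/t)², √(1 − y(t)²) = (a·t + c)/t, and y satisfies 1 − y(t)² − (t/2)·(y²)'(t) = a·√(1 − y(t)²) for all t ∈ T. -/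
/-! Since `t² - ((1 - a²)t² - 2act - c²) = (at + c)²`, the function `y²` equals `1 - (a + c/t)²`
on `T`; hence `1 - y² = (a + c/t)²`, and with `(y²)' = 2c(a + c/t)/t²` the left side of the ODE
becomes `(a + c/t)(a + c/t - c/t) = a(a + c/t)`. -/

open Filter Topology

lemma sq_sqrt_quadratic_div {a c t : ℝ} (hQ : 0 ≤ (1 - a ^ 2) * t ^ 2 - 2 * a * c * t - c ^ 2)
    (ht : t ≠ 0) :
    (Real.sqrt ((1 - a ^ 2) * t ^ 2 - 2 * a * c * t - c ^ 2) / t) ^ 2 = 1 - (a + c / t) ^ 2 := by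
  rw [div_pow, Real.sq_sqrt hQ]
  field_simp
  ring

lemma hasDerivAt_one_sub_sq_add_div (a c : ℝ) {t : ℝ} (ht : t ≠ 0) :
    HasDerivAt (fun s => 1 - (a + c / s) ^ 2) (2 * c * (a + c / t) / t ^ 2) t := by
  simp only [div_eq_mul_inv]
  refine ((((hasDerivAt_inv ht).const_mul c).const_add a).fun_pow 2).const_sub 1
    |>.congr_deriv ?_
  push_cast
  ring

theorem parallel_case_ii_ode_solution_general
    (a c : ℝ)
    (T : Set ℝ) (hT : IsOpen T) (hTsub : T ⊆ Set.Ioi 0)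
    (hpos : ∀ t ∈ T, 0 < (1 - a ^ 2) * t ^ 2 - 2 * a * c * t - c ^ 2)
    (hac : ∀ t ∈ T, 0 < a * t + c)
    (y : ℝ → ℝ)
    (hy : ∀ t ∈ T, y t = Real.sqrt ((1 - a ^ 2) * t ^ 2 - 2 * a * c * t - c ^ 2) / t) :
    ∀ t ∈ T,
      1 - (y t) ^ 2 = ((a * t + c) / t) ^ 2 ∧
      Real.sqrt (1 - (y t) ^ 2) = (a * t + c) / t ∧
      1 - (y t) ^ 2 - (t / 2) * deriv (fun s => (y s) ^ 2) t =
        a * Real.sqrt (1 - (y t) ^ 2) := by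
  intro t ht
  have ht0 : 0 < t := hTsub ht
  have hy_sq : ∀ s ∈ T, y s ^ 2 = 1 - (a + c / s) ^ 2 := fun s hs => by
    rw [hy s hs, sq_sqrt_quadratic_div (hpos s hs).le (hTsub hs).ne']
  have hw : a + c / t = (a * t + c) / t := by field_simp
  have h_one_sub : 1 - y t ^ 2 = ((a * t + c) / t) ^ 2 := by rw [hy_sq t ht, ← hw]; ring
  have h_sqrt : Real.sqrt (1 - y t ^ 2) = (a * t + c) / t := by
    rw [h_one_sub, Real.sqrt_sq (div_pos (hac t ht) ht0).le]
  have h_deriv : deriv (fun s => y s ^ 2) t = 2 * c * (a + c / t) / t ^ 2 := by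
    have h_eq : (fun s => y s ^ 2) =ᶠ[𝓝 t] fun s => 1 - (a + c / s) ^ 2 :=
      eventually_of_mem (hT.mem_nhds ht) hy_sq
    rw [h_eq.deriv_eq, (hasDerivAt_one_sub_sq_add_div a c ht0.ne').deriv]
  refine ⟨h_one_sub, h_sqrt, ?_⟩
  rw [h_deriv, h_sqrt, h_one_sub, ← hw]
  field_simp
  ring

/-- Case (ii) of the classification of meridian surfaces with parallel normal bundle:
`y(t) = √((1 − a²)t² − 2act − c²)/t` satisfies `1 − y² = ((at + c)/t)²`,
`√(1 − y²) = (at + c)/t`, and solves the ODE `1 − y² − (t/2)(y²)' = a√(1 − y²)`. -/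
theorem parallel_case_ii_ode_solution
    (a c : ℝ) (ha : a ≠ 0)
    (T : Set ℝ) (hT : IsOpen T) (hTc : T.OrdConnected) (hTsub : T ⊆ Set.Ioi 0)
    (hpos : ∀ t ∈ T, 0 < (1 - a ^ 2) * t ^ 2 - 2 * a * c * t - c ^ 2)
    (hac : ∀ t ∈ T, 0 < a * t + c)
    (y : ℝ → ℝ)
    (hy : ∀ t ∈ T, y t = Real.sqrt ((1 - a ^ 2) * t ^ 2 - 2 * a * c * t - c ^ 2) / t) :
    ∀ t ∈ T,
      1 - (y t) ^ 2 = ((a * t + c) / t) ^ 2 ∧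
      Real.sqrt (1 - (y t) ^ 2) = (a * t + c) / t ∧
      1 - (y t) ^ 2 - (t / 2) * deriv (fun s => (y s) ^ 2) t =
        a * Real.sqrt (1 - (y t) ^ 2) :=
  parallel_case_ii_ode_solution_general a c T hT hTsub hpos hac y hy
end

section
/- Let I and J be open real intervals. Let f, g : I → ℝ be smooth functions with f(u) > 0 and f'(u)² + g'(u)² = 1 for all u ∈ I. Let l, t, n : J → ℝ⁴ be smooth maps taking values in the hyperplane {x ∈ ℝ⁴ : x₄ = 0}, such that for every v ∈ J the triple (l(v), t(v), n(v)) is orthonormal and l' = t, t' = κn − l, n' = −κt for a smooth κ : J → ℝ. Let z(u,v) = f(u)·l(v) + g(u)·e₄ with e₄ = (0,0,0,1), let n₁ = n(v), n₂ = −g'(u)·l(v) + f'(u)·e₄, and κ_m = f'g'' − g'f''. Then the second-order coefficients satisfy ⟨z_uu, n₁⟩ = 0, ⟨z_uv, n₁⟩ = 0, ⟨z_vv, n₁⟩ = f·κ, ⟨z_uu, n₂⟩ = κ_m, ⟨z_uv, n₂⟩ = 0, ⟨z_vv, n₂⟩ = f·g'. Consequently, with W = f, the functions L = (2/W)(⟨z_uu,n₁⟩⟨z_uv,n₂⟩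 − ⟨z_uv,n₁⟩⟨z_uu,n₂⟩) and N = (2/W)(⟨z_uv,n₁⟩⟨z_vv,n₂⟩ − ⟨z_vv,n₁⟩⟨z_uv,n₂⟩) vanish identically, and M = (1/W)(⟨z_uu,n₁⟩⟨z_vv,n₂⟩ − ⟨z_vv,n₁⟩⟨z_uu,n₂⟩) = −κ_m(u)·κ(v). -/
/-- The second fundamental form coefficients of the meridian surface
`z(u,v) = f(u)·l(v) + g(u)·e₄`: `⟨z_uu, n₁⟩ = 0`, `⟨z_uv, n₁⟩ = 0`,
`⟨z_vv, n₁⟩ = f·κ`, `⟨z_uu, n₂⟩ = κ_m`, `⟨z_uv, n₂⟩ = 0`, `⟨z_vv, n₂⟩ = f·g'`;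
consequently `L = N = 0` and `M = −κ_m·κ` (with `W = f`). -/
theorem meridian_surface_second_fundamental_form
    (I J : Set ℝ) (hI : IsOpen I) (hIc : I.OrdConnected)
    (hJ : IsOpen J) (hJc : J.OrdConnected)
    (f g : ℝ → ℝ) (hf : ContDiffOn ℝ (⊤ : ℕ∞) f I) (hg : ContDiffOn ℝ (⊤ : ℕ∞) g I)
    (hfpos : ∀ u ∈ I, 0 < f u)
    (hunit : ∀ u ∈ I, (deriv f u) ^ 2 + (deriv g u) ^ 2 = 1)
    (l t n : ℝ → EuclideanSpace ℝ (Fin 4)) (κ : ℝ → ℝ)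
    (hl : ContDiffOn ℝ (⊤ : ℕ∞) l J) (ht : ContDiffOn ℝ (⊤ : ℕ∞) t J) (hn : ContDiffOn ℝ (⊤ : ℕ∞) n J)
    (hκ : ContDiffOn ℝ (⊤ : ℕ∞) κ J)
    (hplane : ∀ v ∈ J, l v 3 = 0 ∧ t v 3 = 0 ∧ n v 3 = 0)
    (horth : ∀ v ∈ J, Orthonormal ℝ ![l v, t v, n v])
    (hFrenet : ∀ v ∈ J, deriv l v = t v ∧
      deriv t v = κ v • n v - l v ∧ deriv n v = -(κ v) • t v)
    (e₄ : EuclideanSpace ℝ (Fin 4)) (he₄ : e₄ = EuclideanSpace.single (3 : Fin 4) (1 : ℝ))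
    (z : ℝ → ℝ → EuclideanSpace ℝ (Fin 4))
    (hz : ∀ u v, z u v = f u • l v + g u • e₄)
    (n₁ n₂ : ℝ → ℝ → EuclideanSpace ℝ (Fin 4))
    (hn₁ : ∀ u v, n₁ u v = n v)
    (hn₂ : ∀ u v, n₂ u v = -(deriv g u) • l v + deriv f u • e₄)
    (κm : ℝ → ℝ)
    (hκm : ∀ u ∈ I, κm u =
      deriv f u * deriv (deriv g) u - deriv g u * deriv (deriv f) u)
    (zu zv zuu zuv zvv : ℝ → ℝ → EuclideanSpace ℝ (Fin 4))
    (hzu : ∀ u v, zu u v = deriv (fun s => z s v) u)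
    (hzv : ∀ u v, zv u v = deriv (fun s => z u s) v)
    (hzuu : ∀ u v, zuu u v = deriv (fun s => zu s v) u)
    (hzuv : ∀ u v, zuv u v = deriv (fun s => zu u s) v)
    (hzvv : ∀ u v, zvv u v = deriv (fun s => zv u s) v) :
    ∀ u ∈ I, ∀ v ∈ J,
      (inner ℝ (zuu u v) (n₁ u v) : ℝ) = 0 ∧
      (inner ℝ (zuv u v) (n₁ u v) : ℝ) = 0 ∧
      (inner ℝ (zvv u v) (n₁ u v) : ℝ) = f u * κ v ∧
      (inner ℝ (zuu u v) (n₂ u v) : ℝ) = κm u ∧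
      (inner ℝ (zuv u v) (n₂ u v) : ℝ) = 0 ∧
      (inner ℝ (zvv u v) (n₂ u v) : ℝ) = f u * deriv g u ∧
      (2 / f u) * ((inner ℝ (zuu u v) (n₁ u v) : ℝ) * (inner ℝ (zuv u v) (n₂ u v) : ℝ) -
        (inner ℝ (zuv u v) (n₁ u v) : ℝ) * (inner ℝ (zuu u v) (n₂ u v) : ℝ)) = 0 ∧
      (2 / f u) * ((inner ℝ (zuv u v) (n₁ u v) : ℝ) * (inner ℝ (zvv u v) (n₂ u v) : ℝ) -
        (inner ℝ (zvv u v) (n₁ u v) : ℝ) * (inner ℝ (zuv u v) (n₂ u v) : ℝ)) = 0 ∧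
      (1 / f u) * ((inner ℝ (zuu u v) (n₁ u v) : ℝ) * (inner ℝ (zvv u v) (n₂ u v) : ℝ) -
        (inner ℝ (zvv u v) (n₁ u v) : ℝ) * (inner ℝ (zuu u v) (n₂ u v) : ℝ)) =
        -(κm u * κ v) := by
  intro u hu v hv
  -- differentiability facts
  have hfd : ∀ s ∈ I, DifferentiableAt ℝ f s := fun s hs =>
    (hf.contDiffAt (hI.mem_nhds hs)).differentiableAt (by simp)
  have hgd : ∀ s ∈ I, DifferentiableAt ℝ g s := fun s hs =>
    (hg.contDiffAt (hI.mem_nhds hs)).differentiableAt (by simp)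
  have hfd' : DifferentiableAt ℝ (deriv f) u :=
    ((hf.deriv_of_isOpen (m := 1) hI (by exact WithTop.coe_le_coe.mpr le_top)).contDiffAt (hI.mem_nhds hu)).differentiableAt (by simp)
  have hgd' : DifferentiableAt ℝ (deriv g) u :=
    ((hg.deriv_of_isOpen (m := 1) hI (by exact WithTop.coe_le_coe.mpr le_top)).contDiffAt (hI.mem_nhds hu)).differentiableAt (by simp)
  have hld : ∀ s ∈ J, DifferentiableAt ℝ l s := fun s hs =>
    (hl.contDiffAt (hJ.mem_nhds hs)).differentiableAt (by simp)
  have htd : DifferentiableAt ℝ t v :=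
    (ht.contDiffAt (hJ.mem_nhds hv)).differentiableAt (by simp)
  -- first derivatives
  have hzu' : ∀ s ∈ I, ∀ w, zu s w = deriv f s • l w + deriv g s • e₄ := by
    intro s hs w
    rw [hzu]
    have : (fun s' => z s' w) = fun s' => f s' • l w + g s' • e₄ :=
      funext fun s' => hz s' w
    rw [this, deriv_fun_add ((hfd s hs).smul_const _) ((hgd s hs).smul_const _),
      deriv_smul_const (hfd s hs), deriv_smul_const (hgd s hs)]
  have hzv' : ∀ w ∈ J, zv u w = f u • t w := by
    intro w hw
    rw [hzv]
    have : (fun s => z u s) = fun s => f u • l s + g u • e₄ := funext fun s => hz u s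
    rw [this, deriv_fun_add (f := fun s => f u • l s) ((hld w hw).const_smul (f u)) (differentiableAt_const _),
      deriv_const, deriv_fun_const_smul _ (hld w hw), (hFrenet w hw).1, add_zero]
  -- second derivatives
  have hzuu : zuu u v = deriv (deriv f) u • l v + deriv (deriv g) u • e₄ := by
    rw [hzuu]
    have hev : (fun s => zu s v) =ᶠ[nhds u] fun s => deriv f s • l v + deriv g s • e₄ := by
      filter_upwards [hI.mem_nhds hu] with s hs using hzu' s hs v
    rw [hev.deriv_eq, deriv_fun_add (hfd'.smul_const _) (hgd'.smul_const _),
      deriv_smul_const hfd', deriv_smul_const hgd']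
  have hzuv : zuv u v = deriv f u • t v := by
    rw [hzuv]
    have : (fun s => zu u s) = fun s => deriv f u • l s + deriv g u • e₄ :=
      funext fun s => hzu' u hu s
    rw [this, deriv_fun_add (f := fun s => deriv f u • l s) ((hld v hv).const_smul (deriv f u)) (differentiableAt_const _),
      deriv_const, deriv_fun_const_smul _ (hld v hv), (hFrenet v hv).1, add_zero]
  have hzvv : zvv u v = f u • (κ v • n v - l v) := by
    rw [hzvv]
    have hev : (fun s => zv u s) =ᶠ[nhds v] fun s => f u • t s := by
      filter_upwards [hJ.mem_nhds hv] with s hs using hzv' s hs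
    rw [hev.deriv_eq, deriv_fun_const_smul _ htd, (hFrenet v hv).2.1]
  -- inner product facts
  have horth' := (orthonormal_iff_ite (𝕜 := ℝ)).mp (horth v hv)
  have hll : (inner ℝ (l v) (l v) : ℝ) = 1 := by simpa using horth' 0 0
  have htt : (inner ℝ (t v) (t v) : ℝ) = 1 := by simpa using horth' 1 1
  have hnn : (inner ℝ (n v) (n v) : ℝ) = 1 := by simpa using horth' 2 2
  have hlt : (inner ℝ (l v) (t v) : ℝ) = 0 := by simpa using horth' 0 1
  have hln : (inner ℝ (l v) (n v) : ℝ) = 0 := by simpa using horth' 0 2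
  have htl : (inner ℝ (t v) (l v) : ℝ) = 0 := by simpa using horth' 1 0
  have htn : (inner ℝ (t v) (n v) : ℝ) = 0 := by simpa using horth' 1 2
  have hnl : (inner ℝ (n v) (l v) : ℝ) = 0 := by simpa using horth' 2 0
  have hnt : (inner ℝ (n v) (t v) : ℝ) = 0 := by simpa using horth' 2 1
  have he4 : ∀ x : EuclideanSpace ℝ (Fin 4), (inner ℝ e₄ x : ℝ) = x 3 := by
    intro x; rw [he₄, EuclideanSpace.inner_single_left]; simp
  have he4' : ∀ x : EuclideanSpace ℝ (Fin 4), (inner ℝ x e₄ : ℝ) = x 3 := by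
    intro x; rw [real_inner_comm]; exact he4 x
  have he44 : (inner ℝ e₄ e₄ : ℝ) = 1 := by rw [he4, he₄]; simp
  have hl3 := (hplane v hv).1
  have ht3 := (hplane v hv).2.1
  have hn3 := (hplane v hv).2.2
  have he4l : (inner ℝ e₄ (l v) : ℝ) = 0 := by rw [he4, hl3]
  have hle4 : (inner ℝ (l v) e₄ : ℝ) = 0 := by rw [he4', hl3]
  have hte4 : (inner ℝ (t v) e₄ : ℝ) = 0 := by rw [he4', ht3]
  have he4n : (inner ℝ e₄ (n v) : ℝ) = 0 := by rw [he4, hn3]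
  have hne4 : (inner ℝ (n v) e₄ : ℝ) = 0 := by rw [he4', hn3]
  have hfu : f u ≠ 0 := ne_of_gt (hfpos u hu)
  have e1 : (inner ℝ (zuu u v) (n₁ u v) : ℝ) = 0 := by
    rw [hzuu, hn₁]
    simp only [inner_add_left, real_inner_smul_left, hln, he4n]
    ring
  have e2 : (inner ℝ (zuv u v) (n₁ u v) : ℝ) = 0 := by
    rw [hzuv, hn₁]
    simp only [real_inner_smul_left, htn]
    ring
  have e3 : (inner ℝ (zvv u v) (n₁ u v) : ℝ) = f u * κ v := by
    rw [hzvv, hn₁]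
    simp only [inner_sub_left, real_inner_smul_left, hnn, hln]
    ring
  have e4 : (inner ℝ (zuu u v) (n₂ u v) : ℝ) = κm u := by
    rw [hzuu, hn₂, hκm u hu]
    simp only [inner_add_left, inner_add_right, real_inner_smul_left, real_inner_smul_right,
      hll, hle4, he4l, he44]
    ring
  have e5 : (inner ℝ (zuv u v) (n₂ u v) : ℝ) = 0 := by
    rw [hzuv, hn₂]
    simp only [inner_add_right, real_inner_smul_left, real_inner_smul_right, htl, hte4]
    ring
  have e6 : (inner ℝ (zvv u v) (n₂ u v) : ℝ) = f u * deriv g u := by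
    rw [hzvv, hn₂]
    simp only [inner_sub_left, inner_add_left, inner_add_right, real_inner_smul_left,
      real_inner_smul_right, hnl, hne4, hll, hle4, he4l, he44]
    ring
  refine ⟨e1, e2, e3, e4, e5, e6, ?_, ?_, ?_⟩
  · rw [e1, e2, e5]; ring
  · rw [e2, e3, e5, e6]; ring
  · rw [e1, e3, e4, e6]; field_simp; ring
end

section
/- Let I and J be open real intervals. Let f, g : I → ℝ be smooth with f(u) > 0 and f'(u)² + g'(u)² = 1 for all u ∈ I. Let l, t, n : J → ℝ⁴ be smooth maps with values in the hyperplane {x₄ = 0} such that (l(v), t(v), n(v)) is orthonormal for each v and l' = t, t' = κn − l, n' = −κt for a smooth κ : J → ℝ. Let z(u,v) = f(u)·l(v) + g(u)·e₄, κ_m = f'g'' − g'f'', n₁ = n and n₂ = −g'·l + f'·e₄. Then the mean curvature vector H = (1/2)(z_uu + z_vv/f² + (f'/f)·z_u) satisfies H = (κ/(2f))·n₁ + ((g' + f·κ_m)/(2f))·n₂, and its squared Euclidean norm is ‖H‖² = (κ² + (g' + f·κ_m)²)/(4f²). -/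
/-- The mean curvature vector of the meridian surface `z(u,v) = f(u)·l(v) + g(u)·e₄`:
`H = (1/2)(z_uu + z_vv/f² + (f'/f)z_u) = (κ/(2f))·n₁ + ((g' + fκ_m)/(2f))·n₂`, and
`‖H‖² = (κ² + (g' + fκ_m)²)/(4f²)`. -/
theorem meridian_surface_mean_curvature
    (I J : Set ℝ) (hI : IsOpen I) (hIc : I.OrdConnected)
    (hJ : IsOpen J) (hJc : J.OrdConnected)
    (f g : ℝ → ℝ) (hf : ContDiffOn ℝ (⊤ : ℕ∞) f I) (hg : ContDiffOn ℝ (⊤ : ℕ∞) g I)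
    (hfpos : ∀ u ∈ I, 0 < f u)
    (hunit : ∀ u ∈ I, (deriv f u) ^ 2 + (deriv g u) ^ 2 = 1)
    (l t n : ℝ → EuclideanSpace ℝ (Fin 4)) (κ : ℝ → ℝ)
    (hl : ContDiffOn ℝ (⊤ : ℕ∞) l J) (ht : ContDiffOn ℝ (⊤ : ℕ∞) t J) (hn : ContDiffOn ℝ (⊤ : ℕ∞) n J)
    (hκ : ContDiffOn ℝ (⊤ : ℕ∞) κ J)
    (hplane : ∀ v ∈ J, l v 3 = 0 ∧ t v 3 = 0 ∧ n v 3 = 0)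
    (horth : ∀ v ∈ J, Orthonormal ℝ ![l v, t v, n v])
    (hFrenet : ∀ v ∈ J, deriv l v = t v ∧
      deriv t v = κ v • n v - l v ∧ deriv n v = -(κ v) • t v)
    (e₄ : EuclideanSpace ℝ (Fin 4)) (he₄ : e₄ = EuclideanSpace.single (3 : Fin 4) (1 : ℝ))
    (z : ℝ → ℝ → EuclideanSpace ℝ (Fin 4))
    (hz : ∀ u v, z u v = f u • l v + g u • e₄)
    (κm : ℝ → ℝ)
    (hκm : ∀ u ∈ I, κm u =
      deriv f u * deriv (deriv g) u - deriv g u * deriv (deriv f) u)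
    (n₁ n₂ : ℝ → ℝ → EuclideanSpace ℝ (Fin 4))
    (hn₁ : ∀ u v, n₁ u v = n v)
    (hn₂ : ∀ u v, n₂ u v = -(deriv g u) • l v + deriv f u • e₄)
    (zu zv zuu zvv : ℝ → ℝ → EuclideanSpace ℝ (Fin 4))
    (hzu : ∀ u v, zu u v = deriv (fun s => z s v) u)
    (hzv : ∀ u v, zv u v = deriv (fun s => z u s) v)
    (hzuu : ∀ u v, zuu u v = deriv (fun s => zu s v) u)
    (hzvv : ∀ u v, zvv u v = deriv (fun s => zv u s) v)
    (H : ℝ → ℝ → EuclideanSpace ℝ (Fin 4))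
    (hH : ∀ u v, H u v = (1 / 2 : ℝ) •
      (zuu u v + ((f u) ^ 2)⁻¹ • zvv u v + (deriv f u / f u) • zu u v)) :
    ∀ u ∈ I, ∀ v ∈ J,
      H u v = (κ v / (2 * f u)) • n₁ u v +
        ((deriv g u + f u * κm u) / (2 * f u)) • n₂ u v ∧
      ‖H u v‖ ^ 2 = ((κ v) ^ 2 + (deriv g u + f u * κm u) ^ 2) / (4 * (f u) ^ 2) := by
  intro u hu v hv
  have hF : f u ≠ 0 := (hfpos u hu).ne'
  -- derivatives of f and g
  have hdfI : ∀ s ∈ I, HasDerivAt f (deriv f s) s := fun s hs =>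
    ((hf.contDiffAt (hI.mem_nhds hs)).differentiableAt (by simp)).hasDerivAt
  have hdgI : ∀ s ∈ I, HasDerivAt g (deriv g s) s := fun s hs =>
    ((hg.contDiffAt (hI.mem_nhds hs)).differentiableAt (by simp)).hasDerivAt
  have hdf' : HasDerivAt (deriv f) (deriv (deriv f) u) u :=
    (((hf.deriv_of_isOpen (m := 1) hI (by exact WithTop.coe_le_coe.mpr le_top)).contDiffAt (hI.mem_nhds hu)).differentiableAt (by simp)).hasDerivAt
  have hdg' : HasDerivAt (deriv g) (deriv (deriv g) u) u :=
    (((hg.deriv_of_isOpen (m := 1) hI (by exact WithTop.coe_le_coe.mpr le_top)).contDiffAt (hI.mem_nhds hu)).differentiableAt (by simp)).hasDerivAt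
  -- key identity f' f'' + g' g'' = 0
  have key : deriv f u * deriv (deriv f) u + deriv g u * deriv (deriv g) u = 0 := by
    have hev : (fun s => (deriv f s) ^ 2 + (deriv g s) ^ 2) =ᶠ[nhds u] fun _ => (1 : ℝ) :=
      Filter.eventuallyEq_of_mem (hI.mem_nhds hu) (fun s hs => hunit s hs)
    have hD := ((hdf'.pow 2).add (hdg'.pow 2)).deriv
    rw [show (deriv f ^ 2 + deriv g ^ 2) = (fun s => deriv f s ^ 2 + deriv g s ^ 2) from rfl] at hD
    rw [hev.deriv_eq, deriv_const] at hD
    norm_num at hD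
    linarith
  -- zu on I
  have hzuEq : ∀ s ∈ I, zu s v = deriv f s • l v + deriv g s • e₄ := by
    intro s hs
    have hD : HasDerivAt (fun s' => z s' v) (deriv f s • l v + deriv g s • e₄) s := by
      simp only [hz]
      exact ((hdfI s hs).smul_const (l v)).add ((hdgI s hs).smul_const e₄)
    rw [hzu]; exact hD.deriv
  have hzu' := hzuEq u hu
  have hzuu' : zuu u v = deriv (deriv f) u • l v + deriv (deriv g) u • e₄ := by
    rw [hzuu]
    have hev : (fun s => zu s v) =ᶠ[nhds u] fun s => deriv f s • l v + deriv g s • e₄ :=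
      Filter.eventuallyEq_of_mem (hI.mem_nhds hu) (fun s hs => hzuEq s hs)
    rw [hev.deriv_eq]
    exact ((hdf'.smul_const (l v)).add (hdg'.smul_const e₄)).deriv
  -- zv on J
  have hzvEq : ∀ s ∈ J, zv u s = f u • t s := by
    intro s hs
    have hdls : HasDerivAt l (t s) s := by
      have h := ((hl.contDiffAt (hJ.mem_nhds hs)).differentiableAt (by simp)).hasDerivAt
      rwa [(hFrenet s hs).1] at h
    have hD : HasDerivAt (fun s' => z u s') (f u • t s) s := by
      simp only [hz]
      simpa using (hdls.const_smul (f u)).add_const (g u • e₄)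
    rw [hzv]; exact hD.deriv
  have hzvv' : zvv u v = f u • (κ v • n v - l v) := by
    rw [hzvv]
    have hev : (fun s => zv u s) =ᶠ[nhds v] fun s => f u • t s :=
      Filter.eventuallyEq_of_mem (hJ.mem_nhds hv) (fun s hs => hzvEq s hs)
    rw [hev.deriv_eq]
    have hdtv : HasDerivAt t (κ v • n v - l v) v := by
      have h := ((ht.contDiffAt (hJ.mem_nhds hv)).differentiableAt (by simp)).hasDerivAt
      rwa [(hFrenet v hv).2.1] at h
    exact (hdtv.const_smul (f u)).deriv
  -- part 1
  have part1 : H u v = (κ v / (2 * f u)) • n₁ u v +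
      ((deriv g u + f u * κm u) / (2 * f u)) • n₂ u v := by
    rw [hH, hzuu', hzvv', hzu', hn₁ u v, hn₂ u v, hκm u hu]
    have hu1 := hunit u hu
    match_scalars
    · field_simp
      linear_combination (f u * deriv f u) * key + (1 - f u * deriv (deriv f) u) * hu1
    · field_simp
      linear_combination (f u * deriv g u) * key - (f u * deriv (deriv g) u) * hu1
    · field_simp
  refine ⟨part1, ?_⟩
  -- inner products
  have o := horth v hv
  have hll : (inner ℝ (l v) (l v) : ℝ) = 1 := by
    have h := o.1 0
    simp only [Matrix.cons_val_zero] at h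
    rw [real_inner_self_eq_norm_sq, h]; norm_num
  have hnn : (inner ℝ (n v) (n v) : ℝ) = 1 := by
    have h := o.1 2
    rw [show (![l v, t v, n v] 2) = n v from rfl] at h
    rw [real_inner_self_eq_norm_sq, h]; norm_num
  have hln : (inner ℝ (l v) (n v) : ℝ) = 0 := by
    have h := o.2 (show (0 : Fin 3) ≠ 2 by decide)
    simpa using h
  have hnl : (inner ℝ (n v) (l v) : ℝ) = 0 := by rw [real_inner_comm]; exact hln
  have hle : (inner ℝ (l v) e₄ : ℝ) = 0 := by
    rw [he₄, EuclideanSpace.inner_single_right]; simp [(hplane v hv).1]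
  have hel : (inner ℝ e₄ (l v) : ℝ) = 0 := by rw [real_inner_comm]; exact hle
  have hne : (inner ℝ (n v) e₄ : ℝ) = 0 := by
    rw [he₄, EuclideanSpace.inner_single_right]; simp [(hplane v hv).2.2]
  have hen : (inner ℝ e₄ (n v) : ℝ) = 0 := by rw [real_inner_comm]; exact hne
  have hee : (inner ℝ e₄ e₄ : ℝ) = 1 := by
    rw [he₄, EuclideanSpace.inner_single_right]; simp
  have hu1 := hunit u hu
  have hinner : (inner ℝ (H u v) (H u v) : ℝ) =
      (κ v / (2 * f u)) ^ 2 + ((deriv g u + f u * κm u) / (2 * f u)) ^ 2 := by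
    rw [part1, hn₁ u v, hn₂ u v]
    simp only [inner_add_left, inner_add_right, real_inner_smul_left, real_inner_smul_right,
      hll, hnn, hln, hnl, hle, hel, hne, hen, hee]
    linear_combination ((deriv g u + f u * κm u) / (2 * f u)) ^ 2 * hu1
  rw [← real_inner_self_eq_norm_sq, hinner, div_pow, div_pow,
    show ((2:ℝ) * f u) ^ 2 = 4 * f u ^ 2 by ring, ← add_div]
end

section
/- Let f > 0, g', κ_m, κ be real numbers with D := κ² + (g' + f·κ_m)² > 0, and define ν = √D/(2f), λ = (κ² + g'² − f²κ_m²)/(2f√D), μ = −κ·κ_m/√D. Then ν² − λ² − μ² = g'·κ_m/f. In particular, if f, g are smooth functions on an interval with f'² + g'² = 1 (so that g'·κ_m = −f'' where κ_m = f'g'' − g'f''), then ν² − λ² − μ² = −f''/f, i.e. the Gauss curvature K = ν₁ν₂ − (λ² + μ²) of the meridian surface equals −f''/f. -/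
/-!
Cleared of denominators, `ν² − λ² − μ² = g'κ_m/f` is a polynomial identity in `f, g', κ_m, κ`.
For a unit-speed meridian, differentiating `f'² + g'² = 1` gives `f'f'' + g'g'' = 0`, and together
with `f'² + g'² = 1` this turns `g'κ_m = g'f'g'' − g'²f''` into `−f''`.
-/

open Filter Topology

noncomputable def meridianNu (f g' κm κ : ℝ) : ℝ :=
  Real.sqrt (κ ^ 2 + (g' + f * κm) ^ 2) / (2 * f)

noncomputable def meridianLambda (f g' κm κ : ℝ) : ℝ :=
  (κ ^ 2 + g' ^ 2 - f ^ 2 * κm ^ 2) / (2 * f * Real.sqrt (κ ^ 2 + (g' + f * κm) ^ 2))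

noncomputable def meridianMu (f g' κm κ : ℝ) : ℝ :=
  -(κ * κm) / Real.sqrt (κ ^ 2 + (g' + f * κm) ^ 2)

/-- With `D = κ² + (g' + fκ_m)²` and `A = κ² + g'² − f²κ_m²`, this holds because
`D − A = 2fκ_m(g' + fκ_m)` and `D + A = 2(κ² + g'² + fg'κ_m)`. -/
theorem meridian_sq_sub_sq_sub_sq (f g' κm κ : ℝ) :
    (κ ^ 2 + (g' + f * κm) ^ 2) ^ 2 - (κ ^ 2 + g' ^ 2 - f ^ 2 * κm ^ 2) ^ 2
      - 4 * f ^ 2 * κ ^ 2 * κm ^ 2 = 4 * f * g' * κm * (κ ^ 2 + (g' + f * κm) ^ 2) := by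
  ring

theorem meridianNu_sq_sub_meridianLambda_sq_sub_meridianMu_sq {f g' κm κ : ℝ} (hf : f ≠ 0)
    (hD : 0 < κ ^ 2 + (g' + f * κm) ^ 2) :
    meridianNu f g' κm κ ^ 2 - meridianLambda f g' κm κ ^ 2 - meridianMu f g' κm κ ^ 2 =
      g' * κm / f := by
  set D := κ ^ 2 + (g' + f * κm) ^ 2 with hD_def
  have hsqrt : Real.sqrt D ^ 2 = D := Real.sq_sqrt hD.le
  have hsqrt_ne : Real.sqrt D ≠ 0 := (Real.sqrt_pos.mpr hD).ne'
  simp only [meridianNu, meridianLambda, meridianMu, div_pow, mul_pow, neg_sq, ← hD_def, hsqrt]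
  field_simp
  linear_combination meridian_sq_sub_sq_sub_sq f g' κm κ

theorem mul_deriv_add_mul_deriv_eq_zero_of_eventually_sq_add_sq_eq {p q : ℝ → ℝ} {u c : ℝ}
    (hp : DifferentiableAt ℝ p u) (hq : DifferentiableAt ℝ q u)
    (h : ∀ᶠ x in 𝓝 u, p x ^ 2 + q x ^ 2 = c) :
    p u * deriv p u + q u * deriv q u = 0 := by
  have hderiv : HasDerivAt (fun x => p x ^ 2 + q x ^ 2)
      (2 * (p u * deriv p u + q u * deriv q u)) u :=
    ((hp.hasDerivAt.fun_pow 2).fun_add (hq.hasDerivAt.fun_pow 2)).congr_deriv (by norm_num; ring)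
  have hconst : (fun x => p x ^ 2 + q x ^ 2) =ᶠ[𝓝 u] fun _ => c := h
  have hzero : deriv (fun x => p x ^ 2 + q x ^ 2) u = 0 := by
    rw [hconst.deriv_eq, deriv_const]
  linarith [hderiv.deriv.symm.trans hzero]

theorem deriv_mul_curvature_eq_neg_deriv_deriv {f g : ℝ → ℝ} {I : Set ℝ} (hI : IsOpen I)
    (hf : ∀ u ∈ I, DifferentiableAt ℝ (deriv f) u) (hg : ∀ u ∈ I, DifferentiableAt ℝ (deriv g) u)
    (hunit : ∀ u ∈ I, deriv f u ^ 2 + deriv g u ^ 2 = 1) {u : ℝ} (hu : u ∈ I) :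
    deriv g u * (deriv f u * deriv (deriv g) u - deriv g u * deriv (deriv f) u) =
      -deriv (deriv f) u := by
  have horth := mul_deriv_add_mul_deriv_eq_zero_of_eventually_sq_add_sq_eq (hf u hu) (hg u hu)
    (eventually_of_mem (hI.mem_nhds hu) hunit)
  linear_combination deriv f u * horth - deriv (deriv f) u * hunit u hu

/-- With `D = κ² + (g' + fκ_m)²`, `ν = √D/(2f)`, `λ = (κ² + g'² − f²κ_m²)/(2f√D)`,
`μ = −κκ_m/√D`, one has `ν² − λ² − μ² = g'κ_m/f`; in particular, for a unit-speed
meridian (`f'² + g'² = 1`, so `g'κ_m = −f''`), the Gauss curvature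
`K = ν₁ν₂ − (λ² + μ²)` of the meridian surface equals `−f''/f`. -/
theorem meridian_surface_gauss_curvature :
    (∀ f g' κm κ : ℝ, 0 < f → 0 < κ ^ 2 + (g' + f * κm) ^ 2 →
      (Real.sqrt (κ ^ 2 + (g' + f * κm) ^ 2) / (2 * f)) ^ 2 -
        ((κ ^ 2 + g' ^ 2 - f ^ 2 * κm ^ 2) /
          (2 * f * Real.sqrt (κ ^ 2 + (g' + f * κm) ^ 2))) ^ 2 -
        (-(κ * κm) / Real.sqrt (κ ^ 2 + (g' + f * κm) ^ 2)) ^ 2 =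
      g' * κm / f) ∧
    (∀ (I : Set ℝ), IsOpen I → I.OrdConnected →
      ∀ f g : ℝ → ℝ,
      (∀ u ∈ I, DifferentiableAt ℝ f u) →
      (∀ u ∈ I, DifferentiableAt ℝ (deriv f) u) →
      (∀ u ∈ I, DifferentiableAt ℝ g u) →
      (∀ u ∈ I, DifferentiableAt ℝ (deriv g) u) →
      (∀ u ∈ I, (deriv f u) ^ 2 + (deriv g u) ^ 2 = 1) →
      ∀ u ∈ I, 0 < f u →
      ∀ κ : ℝ,
      ∀ κm : ℝ, κm = deriv f u * deriv (deriv g) u - deriv g u * deriv (deriv f) u →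
      0 < κ ^ 2 + (deriv g u + f u * κm) ^ 2 →
      (Real.sqrt (κ ^ 2 + (deriv g u + f u * κm) ^ 2) / (2 * f u)) ^ 2 -
        ((κ ^ 2 + (deriv g u) ^ 2 - (f u) ^ 2 * κm ^ 2) /
          (2 * f u * Real.sqrt (κ ^ 2 + (deriv g u + f u * κm) ^ 2))) ^ 2 -
        (-(κ * κm) / Real.sqrt (κ ^ 2 + (deriv g u + f u * κm) ^ 2)) ^ 2 =
      -(deriv (deriv f) u) / f u) := by
  refine ⟨fun f g' κm κ hf hD =>
    meridianNu_sq_sub_meridianLambda_sq_sub_meridianMu_sq hf.ne' hD, ?_⟩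
  intro I hI _ f g _ hf' _ hg' hunit u hu hfu κ κm hκm hD
  have hcurv := deriv_mul_curvature_eq_neg_deriv_deriv hI hf' hg' hunit hu
  rw [← hκm] at hcurv
  rw [← hcurv]
  exact meridianNu_sq_sub_meridianLambda_sq_sub_meridianMu_sq hfu.ne' hD
end
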